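/- arXiv:2112.03071 — 5 statements merged into one kernel-verified Lean document; each statement's English description precedes it below -/
import Mathlib

section
/- Let P be a periodic orthogonal projection on ℋ = ℓ²(ℤ^d, ℂ^N), fix j ∈ {1,…,d}, and assume the commutator [P, X_j] admits a bounded periodic extension K. Let A be a bounded periodic operator on ℋ. Since X_j δ_0 e_s = 0, one has X_j (P δ_0 e_s) = −K δ_0 e_s ∈ ℋ, so v_s := −P K δ_0 e_s equals (P X_j P) δ_0 e_s. Then the trace per unit volume of the commutator [PAP, P X_j P] vanishes; explicitly, Σ_{s=1}^N ( ⟨ P A* P δ_0 e_s, v_s ⟩ − ⟨ v_s, P A P δ_0 e_s ⟩ ) = 0. -/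
/-! With `δ_u` the standard basis, `K` has matrix entries `(v_j - u_j) P_{uv}`. Hence `K* = -K`
(as `P* = P`), and the Leibniz rule `[P², X_j] = [P, X_j] P + P [P, X_j]` together with `P² = P`
gives `K = KP + PK`, so `PKP = 0`. Moving the projections across the inner products turns the sum
into `-(τ(P · APK) + τ(KPA · P))`, and the trace per unit volume is cyclic on periodic operators,
so this equals `-(τ(A · PKP) + τ(PKP · A)) = 0`. -/

noncomputable section

/-- The lattice `ℤ^d`. -/
abbrev ZLat (d : ℕ) := Fin d → ℤ

/-- The Hilbert space `ℓ²(ℤ^d, ℂ^N)`. -/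
abbrev Hilb (d N : ℕ) := lp (fun _ : ZLat d × Fin N => ℂ) 2

/-- The standard basis vector `δ_x e_s`. -/
def delta {d N : ℕ} (x : ZLat d) (s : Fin N) : Hilb d N := lp.single 2 (x, s) 1

/-- `ψ ∈ ℓ²(ℤ^d, ℂ^N)` is finitely supported. -/
def FinSupp {d N : ℕ} (ψ : Hilb d N) : Prop := (Function.support fun p => ψ p).Finite

open scoped Classical in
/-- The position operator `X_j`, defined (with junk value `0` if the result fails to be
square-summable, which never happens for finitely supported `ψ`) by `(X_j ψ)(x) = x_j ψ(x)`. -/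
def posOp {d N : ℕ} (j : Fin d) (ψ : Hilb d N) : Hilb d N :=
  if h : Memℓp (fun p : ZLat d × Fin N => (p.1 j : ℂ) * ψ p) 2 then ⟨_, h⟩ else 0

/-- A bounded operator `A` on `ℓ²(ℤ^d, ℂ^N)` is periodic, i.e. commutes with all lattice
translations `T_γ`; equivalently, its matrix elements are invariant under simultaneous
translation of both indices. -/
def IsPeriodic {d N : ℕ} (A : Hilb d N →L[ℂ] Hilb d N) : Prop :=
  ∀ (γ x y : ZLat d) (s t : Fin N),
    (inner ℂ (delta (x + γ) s) (A (delta (y + γ) t)) : ℂ) = inner ℂ (delta x s) (A (delta y t))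

/-- `K` is a bounded extension of the commutator `[A, X_j]`. -/
def IsCommExt {d N : ℕ} (A K : Hilb d N →L[ℂ] Hilb d N) (j : Fin d) : Prop :=
  ∀ φ ψ : Hilb d N, FinSupp φ → FinSupp ψ →
    (inner ℂ φ (K ψ) : ℂ) = inner ℂ φ (A (posOp j ψ)) - inner ℂ (posOp j φ) (A ψ)

/-- The trace per unit volume of a bounded periodic operator:
`τ(A) = ∑_{s=1}^N ⟨δ_0 e_s, A δ_0 e_s⟩`. -/
def tau {d N : ℕ} (A : Hilb d N →L[ℂ] Hilb d N) : ℂ :=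
  ∑ s : Fin N, inner ℂ (delta (0 : ZLat d) s) (A (delta 0 s))

/-- `H` has finite range `R`: matrix elements between sites at distance `> R` vanish. -/
def HasFiniteRange {d N : ℕ} (H : Hilb d N →L[ℂ] Hilb d N) (R : ℝ) : Prop :=
  ∀ (x y : ZLat d) (s t : Fin N), R < ‖x - y‖ →
    (inner ℂ (delta x s) (H (delta y t)) : ℂ) = 0

open ContinuousLinearMap ComplexConjugate

section MatrixEntries

variable {d N : ℕ}

def matEntry (C : Hilb d N →L[ℂ] Hilb d N) (u v : ZLat d × Fin N) : ℂ :=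
  inner ℂ (delta u.1 u.2) (C (delta v.1 v.2))

lemma inner_delta_left (ψ : Hilb d N) (u : ZLat d × Fin N) :
    inner ℂ (delta u.1 u.2) ψ = ψ u := by
  simp [delta, lp.inner_single_left]

lemma inner_eq_tsum_conj_mul (f g : Hilb d N) : inner ℂ f g = ∑' u, conj (f u) * g u := by
  rw [lp.inner_eq_tsum (𝕜 := ℂ) f g]
  exact tsum_congr fun u => RCLike.inner_apply' _ _

lemma summable_conj_mul (f g : Hilb d N) : Summable fun u => conj (f u) * g u := by
  simpa only [RCLike.inner_apply'] using lp.summable_inner (𝕜 := ℂ) f g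

lemma apply_delta_apply (C : Hilb d N →L[ℂ] Hilb d N) (u v : ZLat d × Fin N) :
    C (delta v.1 v.2) u = matEntry C u v :=
  (inner_delta_left _ _).symm

lemma adjoint_delta_apply (C : Hilb d N →L[ℂ] Hilb d N) (u v : ZLat d × Fin N) :
    adjoint C (delta u.1 u.2) v = conj (matEntry C u v) := by
  rw [← inner_delta_left, adjoint_inner_right, ← inner_conj_symm]
  rfl

lemma matEntry_adjoint (C : Hilb d N →L[ℂ] Hilb d N) (u v : ZLat d × Fin N) :
    matEntry (adjoint C) u v = conj (matEntry C v u) := by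
  rw [matEntry, adjoint_inner_right, ← inner_conj_symm]
  rfl

lemma matEntry_add (C D : Hilb d N →L[ℂ] Hilb d N) (u v : ZLat d × Fin N) :
    matEntry (C + D) u v = matEntry C u v + matEntry D u v :=
  inner_add_right _ _ _

lemma matEntry_neg (C : Hilb d N →L[ℂ] Hilb d N) (u v : ZLat d × Fin N) :
    matEntry (-C) u v = -matEntry C u v :=
  inner_neg_right _ _

lemma matEntry_mul (C D : Hilb d N →L[ℂ] Hilb d N) (u w : ZLat d × Fin N) :
    matEntry (C * D) u w = ∑' v, matEntry C u v * matEntry D v w := by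
  rw [matEntry, mul_apply_eq_comp, ← adjoint_inner_left, inner_eq_tsum_conj_mul]
  exact tsum_congr fun v => by rw [adjoint_delta_apply, Complex.conj_conj, apply_delta_apply]

lemma summable_matEntry_mul (C D : Hilb d N →L[ℂ] Hilb d N) (u w : ZLat d × Fin N) :
    Summable fun v => matEntry C u v * matEntry D v w := by
  refine (summable_conj_mul (adjoint C (delta u.1 u.2)) (D (delta w.1 w.2))).congr fun v => ?_
  rw [adjoint_delta_apply, Complex.conj_conj, apply_delta_apply]

/-- No density argument is needed: `(C ψ) u = ⟪C† δ_u, ψ⟫`, and `C† δ_u` is read off the matrix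
entries. -/
lemma ext_matEntry {C D : Hilb d N →L[ℂ] Hilb d N} (h : ∀ u v, matEntry C u v = matEntry D u v) :
    C = D := by
  have hadj : ∀ u : ZLat d × Fin N, adjoint C (delta u.1 u.2) = adjoint D (delta u.1 u.2) :=
    fun u => lp.ext <| funext fun v => by rw [adjoint_delta_apply, adjoint_delta_apply, h]
  ext ψ u
  rw [← inner_delta_left, ← adjoint_inner_left, hadj u, adjoint_inner_left, inner_delta_left]

end MatrixEntries

lemma sum_tsum_prod_eq_tsum_sum_sum {α ι E : Type*} [Fintype ι] [NormedAddCommGroup E]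
    [CompleteSpace E] (f : ι → α × ι → E) (hf : ∀ i, Summable (f i)) :
    ∑ i, ∑' p, f i p = ∑' a, ∑ i, ∑ j, f i (a, j) := by
  have hfiber : ∀ i j, Summable fun a => f i (a, j) := fun i j =>
    (hf i).comp_injective (Prod.mk_left_injective j)
  rw [Summable.tsum_finsetSum fun i _ => summable_sum fun j _ => hfiber i j]
  refine Finset.sum_congr rfl fun i _ => ?_
  rw [(hf i).tsum_prod]
  exact tsum_congr fun a => tsum_fintype _

section Periodic

variable {d N : ℕ}

lemma IsPeriodic.matEntry_add {C : Hilb d N →L[ℂ] Hilb d N} (hC : IsPeriodic C) (γ : ZLat d)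
    (u v : ZLat d × Fin N) : matEntry C (u.1 + γ, u.2) (v.1 + γ, v.2) = matEntry C u v :=
  hC γ u.1 v.1 u.2 v.2

lemma IsPeriodic.mul {C D : Hilb d N →L[ℂ] Hilb d N} (hC : IsPeriodic C) (hD : IsPeriodic D) :
    IsPeriodic (C * D) := by
  intro γ x y s t
  change matEntry (C * D) (x + γ, s) (y + γ, t) = matEntry (C * D) (x, s) (y, t)
  rw [matEntry_mul, matEntry_mul, ← ((Equiv.addRight γ).prodCongr (Equiv.refl _)).tsum_eq]
  exact tsum_congr fun v => by
    rw [Equiv.prodCongr_apply]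
    exact congrArg₂ (· * ·) (hC.matEntry_add γ (x, s) v) (hD.matEntry_add γ v (y, t))

lemma tau_mul_eq_tsum (C D : Hilb d N →L[ℂ] Hilb d N) :
    tau (C * D) = ∑' x, ∑ s, ∑ t, matEntry C (0, s) (x, t) * matEntry D (x, t) (0, s) :=
  (Finset.sum_congr rfl fun s _ => matEntry_mul C D (0, s) (0, s)).trans <|
    sum_tsum_prod_eq_tsum_sum_sum _ fun s => summable_matEntry_mul C D (0, s) (0, s)

lemma tau_mul_comm {C D : Hilb d N →L[ℂ] Hilb d N} (hC : IsPeriodic C) (hD : IsPeriodic D) :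
    tau (C * D) = tau (D * C) := by
  rw [tau_mul_eq_tsum, tau_mul_eq_tsum, ← (Equiv.neg (ZLat d)).tsum_eq]
  refine tsum_congr fun x => ?_
  rw [Finset.sum_comm]
  refine Finset.sum_congr rfl fun s _ => Finset.sum_congr rfl fun t _ => ?_
  have hCx := hC.matEntry_add x (0, t) (-x, s)
  have hDx := hD.matEntry_add x (-x, s) (0, t)
  simp only [zero_add, neg_add_cancel] at hCx hDx
  rw [Equiv.neg_apply, ← hCx, ← hDx, mul_comm]

end Periodic

section Commutator

variable {d N : ℕ}

lemma finSupp_delta (x : ZLat d) (s : Fin N) : FinSupp (delta x s) := by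
  refine (Set.finite_singleton (x, s)).subset fun p hp => ?_
  by_contra hne
  exact hp (lp.single_apply_ne 2 (x, s) 1 hne)

lemma posOp_delta (j : Fin d) (x : ZLat d) (s : Fin N) :
    posOp j (delta x s) = ((x j : ℤ) : ℂ) • delta x s := by
  have hfun : (fun p : ZLat d × Fin N => (p.1 j : ℂ) * delta x s p)
      = ⇑(((x j : ℤ) : ℂ) • delta x s) := by
    funext p
    rw [lp.coeFn_smul, Pi.smul_apply, smul_eq_mul]
    rcases eq_or_ne p (x, s) with rfl | hne
    · rfl
    · rw [show delta x s p = 0 from lp.single_apply_ne 2 (x, s) 1 hne, mul_zero, mul_zero]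
  rw [posOp, dif_pos (hfun ▸ lp.memℓp _)]
  exact lp.ext hfun

variable {A K : Hilb d N →L[ℂ] Hilb d N} {j : Fin d}

lemma IsCommExt.matEntry_eq (hK : IsCommExt A K j) (u v : ZLat d × Fin N) :
    matEntry K u v = ((v.1 j : ℂ) - u.1 j) * matEntry A u v := by
  have h := hK _ _ (finSupp_delta u.1 u.2) (finSupp_delta v.1 v.2)
  rw [posOp_delta, posOp_delta, map_smul, inner_smul_right, inner_smul_left,
    map_intCast] at h
  rw [matEntry, h, matEntry]
  ring

lemma IsCommExt.adjoint_eq_neg (hA : IsSelfAdjoint A) (hK : IsCommExt A K j) :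
    adjoint K = -K := by
  refine ext_matEntry fun u v => ?_
  rw [matEntry_adjoint, matEntry_neg, hK.matEntry_eq, hK.matEntry_eq, map_mul, map_sub,
    map_intCast, map_intCast, ← matEntry_adjoint, hA.adjoint_eq]
  ring

lemma IsCommExt.eq_mul_add_mul (hA : IsIdempotentElem A) (hK : IsCommExt A K j) :
    K = K * A + A * K := by
  refine ext_matEntry fun u w => ?_
  calc matEntry K u w = ((w.1 j : ℂ) - u.1 j) * matEntry (A * A) u w := by
        rw [hK.matEntry_eq, hA.eq]
    _ = ∑' v, (matEntry K u v * matEntry A v w + matEntry A u v * matEntry K v w) := by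
        rw [matEntry_mul, ← tsum_mul_left]
        refine tsum_congr fun v => ?_
        rw [hK.matEntry_eq, hK.matEntry_eq]
        ring
    _ = matEntry (K * A + A * K) u w := by
        rw [(summable_matEntry_mul K A u w).tsum_add (summable_matEntry_mul A K u w),
          matEntry_add, matEntry_mul, matEntry_mul]

lemma IsCommExt.mul_mul_self_eq_zero (hA : IsIdempotentElem A) (hK : IsCommExt A K j) :
    A * K * A = 0 := by
  have h := congrArg (A * ·) (hK.eq_mul_add_mul hA)
  simp only [mul_add, ← mul_assoc, hA.eq] at h
  exact add_eq_right.mp h.symm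

end Commutator

theorem stmt_3_general {d N : ℕ}
    (P : Hilb d N →L[ℂ] Hilb d N) (hPper : IsPeriodic P)
    (hPsa : IsSelfAdjoint P) (hPidem : P * P = P)
    (j : Fin d) (K : Hilb d N →L[ℂ] Hilb d N) (hKper : IsPeriodic K)
    (hK : IsCommExt P K j)
    (A : Hilb d N →L[ℂ] Hilb d N) (hAper : IsPeriodic A) :
    ∑ s : Fin N,
      ((inner ℂ (P ((ContinuousLinearMap.adjoint A) (P (delta (0 : ZLat d) s))))
          (-(P (K (delta (0 : ZLat d) s)))) : ℂ) -
        (inner ℂ (-(P (K (delta (0 : ZLat d) s)))) (P (A (P (delta (0 : ZLat d) s)))) : ℂ)) = 0 := by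
  have hPsym : ∀ x y, inner ℂ (P x) y = inner ℂ x (P y) := hPsa.isSymmetric
  have hPP : ∀ x, P (P x) = P x := fun x => congr($hPidem x)
  have hterm : ∀ s : Fin N,
      inner ℂ (P (adjoint A (P (delta 0 s)))) (-(P (K (delta 0 s)))) -
          inner ℂ (-(P (K (delta 0 s)))) (P (A (P (delta 0 s))))
        = -(inner ℂ (delta 0 s) (P (A (P (K (delta 0 s))))) +
          inner ℂ (delta 0 s) (K (P (A (P (delta 0 s)))))) := by
    intro s
    have h1 : inner ℂ (P (adjoint A (P (delta 0 s)))) (P (K (delta 0 s)))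
        = inner ℂ (delta 0 s) (P (A (P (K (delta 0 s))))) := by
      rw [hPsym, hPP, adjoint_inner_left, hPsym]
    have h2 : inner ℂ (P (K (delta 0 s))) (P (A (P (delta 0 s))))
        = -inner ℂ (delta 0 s) (K (P (A (P (delta 0 s))))) := by
      rw [hPsym, hPP, ← adjoint_inner_right, hK.adjoint_eq_neg hPsa, neg_apply, inner_neg_right]
    rw [inner_neg_right, inner_neg_left, h1, h2]
    ring
  rw [Finset.sum_congr rfl fun s _ => hterm s, Finset.sum_neg_distrib, Finset.sum_add_distrib]
  have hPKP : P * K * P = 0 := hK.mul_mul_self_eq_zero hPidem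
  change -(tau (P * (A * P * K)) + tau (K * P * A * P)) = 0
  rw [tau_mul_comm hPper ((hAper.mul hPper).mul hKper),
    tau_mul_comm ((hKper.mul hPper).mul hAper) hPper,
    show A * P * K * P = A * (P * K * P) by simp only [mul_assoc],
    show P * (K * P * A) = P * K * P * A by simp only [mul_assoc], hPKP, mul_zero, zero_mul]
  simp [tau]

/-- Let `P` be a periodic orthogonal projection on `ℓ²(ℤ^d, ℂ^N)` such
that `[P, X_j]` admits a bounded periodic extension `K`, and let `A` be bounded and
periodic.  With `v_s := -P K δ_0 e_s` (which equals `(P X_j P) δ_0 e_s`), the trace per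
unit volume of `[PAP, P X_j P]` vanishes:
`∑_s ( ⟨P A* P δ_0 e_s, v_s⟩ - ⟨v_s, P A P δ_0 e_s⟩ ) = 0`. -/
theorem stmt_3 {d N : ℕ} (hd : 0 < d) (hN : 0 < N)
    (P : Hilb d N →L[ℂ] Hilb d N) (hPper : IsPeriodic P)
    (hPsa : IsSelfAdjoint P) (hPidem : P * P = P)
    (j : Fin d) (K : Hilb d N →L[ℂ] Hilb d N) (hKper : IsPeriodic K)
    (hK : IsCommExt P K j)
    (A : Hilb d N →L[ℂ] Hilb d N) (hAper : IsPeriodic A) :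
    ∑ s : Fin N,
      ((inner ℂ (P ((ContinuousLinearMap.adjoint A) (P (delta (0 : ZLat d) s))))
          (-(P (K (delta (0 : ZLat d) s)))) : ℂ) -
        (inner ℂ (-(P (K (delta (0 : ZLat d) s)))) (P (A (P (delta (0 : ZLat d) s)))) : ℂ)) = 0 :=
  stmt_3_general P hPper hPsa hPidem j K hKper hK A hAper
end
end

section
/- Let R be a (not necessarily commutative) ring, let P ∈ R satisfy P² = P, and let A, B ∈ R satisfy AB = BA. Then, writing [S,T] := ST − TS, one has [P A P, P B P] = P [[P,A],[P,B]] P. -/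
/-- In a (possibly noncommutative) ring, if `P` is idempotent and
`A`, `B` commute, then `[PAP, PBP] = P [[P,A],[P,B]] P`, where `[S,T] = ST - TS`. -/
theorem stmt_4 {R : Type*} [Ring R] (P A B : R) (hP : P * P = P) (hAB : A * B = B * A) :
    (P * A * P) * (P * B * P) - (P * B * P) * (P * A * P) =
      P * ((P * A - A * P) * (P * B - B * P) - (P * B - B * P) * (P * A - A * P)) * P := by
  have hP2 : ∀ x : R, P * (P * x) = P * x := fun x => by rw [← mul_assoc, hP]
  have hAB2 : ∀ x : R, A * (B * x) = B * (A * x) := fun x => by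
    rw [← mul_assoc, hAB, mul_assoc]
  simp only [mul_sub, sub_mul, mul_assoc, hP, hP2, hAB2]
  abel
end

section
/- Let R be a ring with unit, let U ∈ R be invertible with inverse U⁻¹, and let P, A, B ∈ R. Set P_U := U P U⁻¹, a := U⁻¹[A,U] and b := U⁻¹[B,U]. Then U⁻¹ [P_U A P_U, P_U B P_U] U = [P A P, P B P] + [P a P, P B P] + [P A P, P b P] + [P a P, P b P]. -/
/-- In a unital ring, if `U` is invertible with inverse `V`, and
`P_U := U P V`, `a := V[A,U]`, `b := V[B,U]`, then
`V [P_U A P_U, P_U B P_U] U = [PAP,PBP] + [PaP,PBP] + [PAP,PbP] + [PaP,PbP]`,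
where `[S,T] = ST - TS`. -/
theorem stmt_5 {R : Type*} [Ring R] (U V P A B : R) (hUV : U * V = 1) (hVU : V * U = 1) :
    V * ((U * P * V) * A * (U * P * V) * ((U * P * V) * B * (U * P * V)) -
          (U * P * V) * B * (U * P * V) * ((U * P * V) * A * (U * P * V))) * U =
      ((P * A * P) * (P * B * P) - (P * B * P) * (P * A * P)) +
      ((P * (V * (A * U - U * A)) * P) * (P * B * P) -
        (P * B * P) * (P * (V * (A * U - U * A)) * P)) +
      ((P * A * P) * (P * (V * (B * U - U * B)) * P) -
        (P * (V * (B * U - U * B)) * P) * (P * A * P)) +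
      ((P * (V * (A * U - U * A)) * P) * (P * (V * (B * U - U * B)) * P) -
        (P * (V * (B * U - U * B)) * P) * (P * (V * (A * U - U * A)) * P)) := by
  have h1 : V * (A * U - U * A) = V * A * U - A := by
    rw [mul_sub, ← mul_assoc, ← mul_assoc, hVU, one_mul]
  have h2 : V * (B * U - U * B) = V * B * U - B := by
    rw [mul_sub, ← mul_assoc, ← mul_assoc, hVU, one_mul]
  have hVU' : ∀ x : R, V * (U * x) = x := fun x => by rw [← mul_assoc, hVU, one_mul]
  rw [h1, h2]
  rw [mul_sub, sub_mul]
  have key : ∀ X Y : R,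
      V * ((U * P * V) * X * (U * P * V) * ((U * P * V) * Y * (U * P * V))) * U =
      (P * (V * X * U) * P) * (P * (V * Y * U) * P) := by
    intro X Y
    simp only [mul_assoc, hVU', hUV]
    simp only [← mul_assoc, hVU, one_mul, mul_one]
  rw [key, key]
  noncomm_ring
end

section
/- Let A and B be bounded periodic operators on ℋ = ℓ²(ℤ^d, ℂ^N). Then the trace per unit volume is cyclic on such operators: τ(AB) = τ(BA), i.e. Σ_{s=1}^N ⟨δ_0 e_s, A B δ_0 e_s⟩ = Σ_{s=1}^N ⟨δ_0 e_s, B A δ_0 e_s⟩. -/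
noncomputable section

/-!
Expanding in the basis `δ_y e_t` (Parseval), `τ(AB) = ∑_y tr (A₀ᵧ Bᵧ₀)`, an unconditionally
convergent sum over `y ∈ ℤ^d`. Periodicity gives `A₀ᵧ = A₋ᵧ,₀` and `Bᵧ₀ = B₀,₋ᵧ`, so by cyclicity of
the finite-dimensional trace the `y`-th term of `τ(AB)` is the `(-y)`-th term of `τ(BA)`.
-/

open scoped InnerProductSpace

theorem HilbertBasis.hasSum_inner_mul_inner_mul {ι 𝕜 E : Type*} [RCLike 𝕜]
    [NormedAddCommGroup E] [InnerProductSpace 𝕜 E] [CompleteSpace E]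
    (b : HilbertBasis ι 𝕜 E) (A B : E →L[𝕜] E) (u v : E) :
    HasSum (fun i => ⟪u, A (b i)⟫_𝕜 * ⟪b i, B v⟫_𝕜) ⟪u, (A * B) v⟫_𝕜 := by
  simpa only [ContinuousLinearMap.adjoint_inner_left, mul_apply_eq_comp] using
    b.hasSum_inner_mul_inner (ContinuousLinearMap.adjoint A u) (B v)

theorem default_hilbertBasis_apply {d N : ℕ} (p : ZLat d × Fin N) :
    (default : HilbertBasis (ZLat d × Fin N) ℂ (Hilb d N)) p = delta p.1 p.2 := by
  rw [← HilbertBasis.repr_symm_single]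
  rfl

/-- `tr (A₀ᵧ Bᵧ₀)`, where `Aₓᵧ` is the `N × N` block of the matrix of `A` between the sites
`x` and `y`. -/
def tauSummand {d N : ℕ} (A B : Hilb d N →L[ℂ] Hilb d N) (y : ZLat d) : ℂ :=
  ∑ t : Fin N, ∑ s : Fin N, ⟪delta 0 s, A (delta y t)⟫_ℂ * ⟪delta y t, B (delta 0 s)⟫_ℂ

theorem hasSum_tauSummand {d N : ℕ} (A B : Hilb d N →L[ℂ] Hilb d N) :
    HasSum (tauSummand A B) (tau (A * B)) := by
  have hsite (s : Fin N) := (default : HilbertBasis (ZLat d × Fin N) ℂ (Hilb d N))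
    |>.hasSum_inner_mul_inner_mul A B (delta 0 s) (delta 0 s)
  simp only [default_hilbertBasis_apply] at hsite
  exact (hasSum_sum fun s _ => hsite s).prod_fiberwise fun y => hasSum_fintype _

theorem IsPeriodic.inner_delta_eq {d N : ℕ} {A : Hilb d N →L[ℂ] Hilb d N} (hA : IsPeriodic A)
    (x y : ZLat d) (s t : Fin N) :
    ⟪delta x s, A (delta y t)⟫_ℂ = ⟪delta (x - y) s, A (delta 0 t)⟫_ℂ := by
  simpa using hA y (x - y) 0 s t

theorem tauSummand_neg {d N : ℕ} {A B : Hilb d N →L[ℂ] Hilb d N} (hA : IsPeriodic A)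
    (hB : IsPeriodic B) (y : ZLat d) :
    tauSummand B A (-y) = tauSummand A B y := by
  rw [tauSummand, tauSummand, Finset.sum_comm]
  refine Finset.sum_congr rfl fun t _ => Finset.sum_congr rfl fun s _ => ?_
  rw [hA.inner_delta_eq 0 y, hB.inner_delta_eq 0 (-y), mul_comm]
  simp only [zero_sub, neg_neg]

theorem stmt_7_general {d N : ℕ}
    (A B : Hilb d N →L[ℂ] Hilb d N) (hA : IsPeriodic A) (hB : IsPeriodic B) :
    tau (A * B) = tau (B * A) := by
  have hBA := (Equiv.neg (ZLat d)).hasSum_iff.mpr (hasSum_tauSummand B A)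
  have hreindex : tauSummand B A ∘ Equiv.neg (ZLat d) = tauSummand A B :=
    funext (tauSummand_neg hA hB)
  exact (hasSum_tauSummand A B).unique (hreindex ▸ hBA)

/-- cyclicity of the trace per unit volume.
For bounded periodic operators `A`, `B` on `ℓ²(ℤ^d, ℂ^N)`, `τ(AB) = τ(BA)`. -/
theorem stmt_7 {d N : ℕ} (hd : 0 < d) (hN : 0 < N)
    (A B : Hilb d N →L[ℂ] Hilb d N) (hA : IsPeriodic A) (hB : IsPeriodic B) :
    tau (A * B) = tau (B * A) :=
  stmt_7_general A B hA hB
end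
end

section
/- Let 𝒜 be a complex unital Banach algebra, a, b ∈ 𝒜, and n ∈ ℕ. Then ‖ exp(a) · b · exp(−a) − Σ_{k=0}^n (1/k!) ad_a^k(b) ‖ ≤ ‖b‖ · (2‖a‖)^{n+1} · exp(2‖a‖) / (n+1)!. -/
/-!
Write `ad_a = L_a - R_a` with `L_a x = a x` and `R_a x = x a`. The operators `L_a` and `R_{-a}`
commute, so `exp(ad_a) = exp(L_a) exp(R_{-a}) = L_{exp a} R_{exp(-a)}` in the Banach algebra of
bounded operators on `𝒜`, i.e. `exp(ad_a) b = exp(a) b exp(-a)`. The left-hand side is therefore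
the Taylor remainder of the exponential at `ad_a`, applied to `b`. Since `k! (n+1)! ≤ (k+n+1)!`,
the remainder of `exp T` after degree `n` has norm at most `‖T‖^(n+1) exp ‖T‖ / (n+1)!`, and
`‖ad_a‖ ≤ 2‖a‖`.
-/

/-- Iterated adjoint action: `adIter a 0 b = b`, `adIter a (k+1) b = [a, adIter a k b]`. -/
def adIter {𝒜 : Type*} [Ring 𝒜] (a : 𝒜) : ℕ → 𝒜 → 𝒜
  | 0, b => b
  | k + 1, b => a * adIter a k b - adIter a k b * a

open Finset (range)
open NormedSpace
open ContinuousLinearMap (mul opNorm_le_bound le_opNorm)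
open scoped Nat

lemma Real.tsum_pow_div_factorial_nat_add_le {t : ℝ} (ht : 0 ≤ t) (m : ℕ) :
    ∑' k, t ^ (k + m) / (k + m)! ≤ t ^ m * Real.exp t / m ! := by
  have hsum : Summable fun k : ℕ => t ^ k / k ! := Real.summable_pow_div_factorial t
  have hterm (k : ℕ) : t ^ (k + m) / (k + m)! ≤ t ^ m / m ! * (t ^ k / k !) := by
    have hfac : (k ! * m ! : ℝ) ≤ (k + m)! := by
      exact_mod_cast Nat.le_of_dvd (Nat.factorial_pos _)
        (Nat.factorial_mul_factorial_dvd_factorial_add k m)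
    calc t ^ (k + m) / (k + m)! ≤ t ^ (k + m) / (k ! * m !) := by gcongr
      _ = t ^ m / m ! * (t ^ k / k !) := by rw [pow_add]; field_simp
  calc ∑' k, t ^ (k + m) / (k + m)! ≤ ∑' k, t ^ m / m ! * (t ^ k / k !) :=
        ((summable_nat_add_iff m).2 hsum).tsum_le_tsum hterm (hsum.mul_left _)
    _ = t ^ m * Real.exp t / m ! := by
      rw [tsum_mul_left, Real.exp_eq_exp_ℝ, exp_eq_tsum_div]; ring

section AdjointAction

variable {𝕂 𝒜 : Type*} [NontriviallyNormedField 𝕂] [NormedRing 𝒜] [NormedAlgebra 𝕂 𝒜]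

lemma ContinuousLinearMap.pow_mul_apply (a : 𝒜) (k : ℕ) :
    mul 𝕂 𝒜 a ^ k = mul 𝕂 𝒜 (a ^ k) := by
  induction k with
  | zero => ext; simp
  | succ k ih => ext; simp [pow_succ, ih, mul_assoc]

lemma ContinuousLinearMap.pow_flip_mul_apply (a : 𝒜) (k : ℕ) :
    (mul 𝕂 𝒜).flip a ^ k = (mul 𝕂 𝒜).flip (a ^ k) := by
  induction k with
  | zero => ext; simp
  | succ k ih => ext; rw [pow_succ', mul_apply_eq_comp, ih]; simp [pow_succ, mul_assoc]

variable (𝕂) in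
noncomputable def adCLM (a : 𝒜) : 𝒜 →L[𝕂] 𝒜 := mul 𝕂 𝒜 a - (mul 𝕂 𝒜).flip a

@[simp]
lemma adCLM_apply (a x : 𝒜) : adCLM 𝕂 a x = a * x - x * a := rfl

lemma adCLM_pow_apply (a b : 𝒜) (k : ℕ) : (adCLM 𝕂 a ^ k) b = adIter a k b := by
  induction k with
  | zero => rfl
  | succ k ih => rw [pow_succ', mul_apply_eq_comp, ih, adCLM_apply, adIter]

lemma norm_adCLM_le (a : 𝒜) : ‖adCLM 𝕂 a‖ ≤ 2 * ‖a‖ :=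
  opNorm_le_bound _ (by positivity) fun x => calc
    ‖a * x - x * a‖ ≤ ‖a‖ * ‖x‖ + ‖x‖ * ‖a‖ :=
      (norm_sub_le _ _).trans (add_le_add (norm_mul_le _ _) (norm_mul_le _ _))
    _ = 2 * ‖a‖ * ‖x‖ := by ring

end AdjointAction

section BanachAlgebra

variable {𝕂 𝔸 𝔹 : Type*} [RCLike 𝕂] [NormedRing 𝔸] [NormedAlgebra 𝕂 𝔸] [CompleteSpace 𝔸]
  [NormedRing 𝔹] [NormedAlgebra 𝕂 𝔹] [CompleteSpace 𝔹]

lemma NormedSpace.norm_exp_sub_sum_range_le (x : 𝔸) (n : ℕ) :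
    ‖exp x - ∑ k ∈ range (n + 1), (k !⁻¹ : 𝕂) • x ^ k‖ ≤
      ‖x‖ ^ (n + 1) * Real.exp ‖x‖ / (n + 1)! := by
  have hs := exp_series_hasSum_exp' (𝕂 := 𝕂) x
  rw [← hs.tsum_eq, ← hs.summable.sum_add_tsum_nat_add (n + 1), add_sub_cancel_left]
  have hterm (k : ℕ) : ‖((k + (n + 1))!⁻¹ : 𝕂) • x ^ (k + (n + 1))‖ ≤
      ‖x‖ ^ (k + (n + 1)) / (k + (n + 1))! := by
    rw [norm_smul, norm_inv, RCLike.norm_natCast, inv_mul_eq_div]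
    gcongr
    exact norm_pow_le' x (by omega)
  exact (tsum_of_norm_bounded ((summable_nat_add_iff (n + 1)).2
    (Real.summable_pow_div_factorial ‖x‖)).hasSum hterm).trans
    (Real.tsum_pow_div_factorial_nat_add_le (norm_nonneg x) (n + 1))

lemma ContinuousLinearMap.map_exp_of_map_pow (f : 𝔸 →L[𝕂] 𝔹) (x : 𝔸)
    (hf : ∀ k : ℕ, f (x ^ k) = f x ^ k) : f (exp x) = exp (f x) := by
  have hs := (exp_series_hasSum_exp' (𝕂 := 𝕂) x).mapL f
  simp only [map_smul, hf] at hs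
  exact hs.unique (exp_series_hasSum_exp' (f x))

lemma exp_adCLM_apply (a b : 𝔸) : exp (adCLM 𝕂 a) b = exp a * b * exp (-a) := by
  have hcomm : Commute (mul 𝕂 𝔸 a) ((mul 𝕂 𝔸).flip (-a)) := by ext; simp [mul_assoc]
  have hsplit : adCLM 𝕂 a = mul 𝕂 𝔸 a + (mul 𝕂 𝔸).flip (-a) := by
    rw [adCLM, map_neg, sub_eq_add_neg]
  have hball (T : 𝔸 →L[𝕂] 𝔸) : T ∈ Metric.eball 0 (expSeries 𝕂 (𝔸 →L[𝕂] 𝔸)).radius := by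
    simp [expSeries_radius_eq_top]
  rw [hsplit, exp_add_of_commute_of_mem_ball hcomm (hball _) (hball _),
    ← (mul 𝕂 𝔸).map_exp_of_map_pow a fun k => (ContinuousLinearMap.pow_mul_apply a k).symm,
    ← (mul 𝕂 𝔸).flip.map_exp_of_map_pow (-a) fun k =>
      (ContinuousLinearMap.pow_flip_mul_apply (-a) k).symm]
  simp [mul_assoc]

end BanachAlgebra

/-- quantitative Hadamard estimate in a complex Banach algebra:
`‖exp(a) b exp(-a) - ∑_{k=0}^n (1/k!) ad_a^k(b)‖ ≤ ‖b‖ (2‖a‖)^{n+1} exp(2‖a‖)/(n+1)!`. -/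
theorem stmt_9 {𝒜 : Type*} [NormedRing 𝒜] [NormedAlgebra ℂ 𝒜] [CompleteSpace 𝒜]
    (a b : 𝒜) (n : ℕ) :
    ‖NormedSpace.exp a * b * NormedSpace.exp (-a) -
        ∑ k ∈ Finset.range (n + 1), ((k.factorial : ℂ))⁻¹ • adIter a k b‖ ≤
      ‖b‖ * (2 * ‖a‖) ^ (n + 1) * Real.exp (2 * ‖a‖) / (n + 1).factorial := by
  set T := adCLM ℂ a
  have hT : exp a * b * exp (-a) - ∑ k ∈ range (n + 1), ((k ! : ℂ))⁻¹ • adIter a k b =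
      (exp T - ∑ k ∈ range (n + 1), ((k ! : ℂ))⁻¹ • T ^ k) b := by
    simp only [T, sub_apply, sum_apply, smul_apply, adCLM_pow_apply, exp_adCLM_apply]
  rw [hT]
  calc _ ≤ ‖exp T - ∑ k ∈ range (n + 1), ((k ! : ℂ))⁻¹ • T ^ k‖ * ‖b‖ := le_opNorm _ _
    _ ≤ ‖T‖ ^ (n + 1) * Real.exp ‖T‖ / (n + 1)! * ‖b‖ := by
      gcongr; exact norm_exp_sub_sum_range_le T n
    _ ≤ (2 * ‖a‖) ^ (n + 1) * Real.exp (2 * ‖a‖) / (n + 1)! * ‖b‖ := by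
      gcongr <;> exact norm_adCLM_le a
    _ = _ := by ring
end
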